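/- arXiv:2408.08625 — 3 statements merged into one kernel-verified Lean document; each statement's English description precedes it below -/
import Mathlib

section
/- Let b : ℝ → ℝ be integrable on [0, l] (l > 0) and symmetric about the channel center, i.e. b(y) = b(l - y) for all y ∈ [0, l]. Define b̄ = (1/l) ∫₀ˡ b(y) dy and S(y) = ∫₀ʸ (b̄ - b(s)) ds. Then the average S̄ = (1/l) ∫₀ˡ S(y) dy equals 0. -/
/-!
Since `b` is symmetric about `l / 2`, so is `b̄ - b`, and its integral over `[0, l]` vanishes;
hence its primitive `S` is antisymmetric about `l / 2`, `S (l - y) = -S y`, and the reflection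
`y ↦ l - y` shows that `∫₀ˡ S = -∫₀ˡ S`.
-/

open MeasureTheory intervalIntegral Set

section Reflection

variable {E : Type*} [NormedAddCommGroup E] [NormedSpace ℝ E] {a : ℝ}

theorem integral_eq_zero_of_apply_sub_eq_neg {f : ℝ → E}
    (hf : ∀ x ∈ uIcc 0 a, f (a - x) = -f x) :
    ∫ x in (0:ℝ)..a, f x = 0 := by
  have := IsAddTorsionFree.of_isTorsionFree ℝ E
  refine self_eq_neg.mp ?_
  calc ∫ x in (0:ℝ)..a, f x = ∫ x in (0:ℝ)..a, f (a - x) := by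
        rw [integral_comp_sub_left, sub_self, sub_zero]
    _ = ∫ x in (0:ℝ)..a, -f x := integral_congr hf
    _ = -∫ x in (0:ℝ)..a, f x := integral_neg

theorem integral_zero_sub_eq_neg_of_symmetric {g : ℝ → E}
    (hg : IntervalIntegrable g volume 0 a) (hsym : ∀ s ∈ uIcc 0 a, g (a - s) = g s)
    (hzero : ∫ s in (0:ℝ)..a, g s = 0) {y : ℝ} (hy : y ∈ uIcc 0 a) :
    ∫ s in (0:ℝ)..(a - y), g s = -∫ s in (0:ℝ)..y, g s := by
  have hay : a - y ∈ uIcc 0 a := by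
    rw [mem_uIcc] at hy ⊢
    rcases hy with h | h
    · left; constructor <;> linarith
    · right; constructor <;> linarith
  have htail : ∫ s in (a - y)..a, g s = ∫ s in (0:ℝ)..y, g s := by
    calc ∫ s in (a - y)..a, g s = ∫ s in (0:ℝ)..y, g (a - s) := by
          rw [integral_comp_sub_left, sub_zero]
      _ = ∫ s in (0:ℝ)..y, g s :=
          integral_congr fun s hs => hsym s (uIcc_subset_uIcc left_mem_uIcc hy hs)
  have hsplit := integral_add_adjacent_intervals
    (hg.mono_set (uIcc_subset_uIcc left_mem_uIcc hay))
    (hg.mono_set (uIcc_subset_uIcc hay right_mem_uIcc))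
  rw [htail, hzero] at hsplit
  exact eq_neg_of_add_eq_zero_left hsplit

end Reflection

theorem integral_sub_average_eq_zero {l : ℝ} (hl : l ≠ 0) {b : ℝ → ℝ}
    (hb : IntervalIntegrable b volume 0 l) :
    ∫ s in (0:ℝ)..l, ((1/l) * ∫ t in (0:ℝ)..l, b t) - b s = 0 := by
  rw [integral_sub intervalIntegrable_const hb, intervalIntegral.integral_const, smul_eq_mul,
    sub_zero]
  field_simp
  ring

/-- For a symmetric bathymetry `b(y) = b(l-y)` on `[0,l]`, the mean of
`S(y) = ∫₀ʸ (b̄ - b(s)) ds` over `[0,l]` vanishes. -/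
theorem mean_S_eq_zero_of_symmetric
    (l : ℝ) (hl : 0 < l) (b : ℝ → ℝ)
    (hb : IntervalIntegrable b volume 0 l)
    (hsym : ∀ y ∈ Set.Icc (0:ℝ) l, b y = b (l - y)) :
    (1/l) * ∫ y in (0:ℝ)..l,
      (∫ s in (0:ℝ)..y, ((1/l) * ∫ t in (0:ℝ)..l, b t) - b s) = 0 := by
  set g : ℝ → ℝ := fun s => ((1/l) * ∫ t in (0:ℝ)..l, b t) - b s
  have hg : IntervalIntegrable g volume 0 l := intervalIntegrable_const.sub hb
  have hg_symm : ∀ s ∈ uIcc 0 l, g (l - s) = g s := by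
    intro s hs
    rw [uIcc_of_le hl.le] at hs
    simp only [g, hsym s hs]
  have hS_antisymm : ∀ y ∈ uIcc 0 l,
      ∫ s in (0:ℝ)..(l - y), g s = -∫ s in (0:ℝ)..y, g s :=
    fun y => integral_zero_sub_eq_neg_of_symmetric hg hg_symm
      (integral_sub_average_eq_zero hl.ne' hb)
  rw [integral_eq_zero_of_apply_sub_eq_neg hS_antisymm, mul_zero]
end

section
/- For the triangular bathymetry on [0, l] with l = l₁ + l₂, defined by b(y) = b₀(1 - y/l₁) for 0 ≤ y ≤ l₁ and b(y) = b₀(y - l₁)/l₂ for l₁ ≤ y ≤ l, the dispersion coefficient χ = Var(S) = S̄² − (S̄)² equals b₀²(l₁² + 4 l₁ l₂ + l₂²)/720, where S(y) = ∫₀ʸ (b̄ - b(s)) ds and the averages are over [0,l]. -/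
/-!
The mean depth is `b₀ / 2`, so on each linear piece of `b` the primitive `S` is a parabolic arch
vanishing at both ends of the piece: `S = -b₀ y (l₁ - y) / (2 l₁)` on `[0, l₁]` and
`S = b₀ (y - l₁) (l - y) / (2 l₂)` on `[l₁, l]`. An arch `c x (w - x)` over `[0, w]` has integral
`c w³ / 6` and square integral `c² w⁵ / 30`, whence `∫ S = b₀ (l₂² - l₁²) / 12` and
`∫ S² = b₀² (l₁³ + l₂³) / 120`; the variance is then a rational identity in `l₁, l₂`.
-/

open MeasureTheory intervalIntegral

open Set

section PolynomialIntegrals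

variable {g : ℝ → ℝ} {a b : ℝ}

lemma integral_affine (p q w : ℝ) : ∫ x in (0:ℝ)..w, (p + q * x) = p * w + q * w ^ 2 / 2 := by
  rw [intervalIntegral.integral_add (by simp) (intervalIntegrable_id.const_mul q),
    intervalIntegral.integral_const_mul, integral_id]
  simp only [intervalIntegral.integral_const, smul_eq_mul]
  ring

lemma integral_parabolicArch (c w : ℝ) : ∫ x in (0:ℝ)..w, c * x * (w - x) = c * w ^ 3 / 6 := by
  have h : (fun x : ℝ => c * x * (w - x)) = fun x => c * w * x - c * x ^ 2 := by ext; ring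
  rw [h, intervalIntegral.integral_sub (intervalIntegrable_id.const_mul _) (by simp),
    intervalIntegral.integral_const_mul, integral_id]
  simp only [intervalIntegral.integral_const_mul, integral_pow]
  ring

lemma integral_parabolicArch_sq (c w : ℝ) :
    ∫ x in (0:ℝ)..w, (c * x * (w - x)) ^ 2 = c ^ 2 * w ^ 5 / 30 := by
  have h : (fun x : ℝ => (c * x * (w - x)) ^ 2) =
      fun x => c ^ 2 * w ^ 2 * x ^ 2 - 2 * c ^ 2 * w * x ^ 3 + c ^ 2 * x ^ 4 := by ext; ring
  rw [h, intervalIntegral.integral_add (by simp) (by simp),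
    intervalIntegral.integral_sub (by simp) (by simp)]
  simp only [intervalIntegral.integral_const_mul, integral_pow]
  ring

lemma integral_of_eqOn_affine {p q : ℝ} (hg : EqOn g (fun y => p + q * (y - a)) (uIcc a b)) :
    ∫ y in a..b, g y = p * (b - a) + q * (b - a) ^ 2 / 2 := by
  rw [integral_congr hg, intervalIntegral.integral_comp_sub_right (fun x => p + q * x), sub_self,
    integral_affine]

lemma integral_of_eqOn_parabolicArch {c : ℝ}
    (hg : EqOn g (fun y => c * (y - a) * (b - y)) (uIcc a b)) :
    ∫ y in a..b, g y = c * (b - a) ^ 3 / 6 := by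
  rw [integral_congr (g := fun y => c * (y - a) * ((b - a) - (y - a)))
      (fun y hy => by simp only [hg hy]; ring),
    intervalIntegral.integral_comp_sub_right (fun x => c * x * ((b - a) - x)), sub_self,
    integral_parabolicArch]

lemma integral_sq_of_eqOn_parabolicArch {c : ℝ}
    (hg : EqOn g (fun y => c * (y - a) * (b - y)) (uIcc a b)) :
    ∫ y in a..b, g y ^ 2 = c ^ 2 * (b - a) ^ 5 / 30 := by
  rw [integral_congr (g := fun y => (c * (y - a) * ((b - a) - (y - a))) ^ 2)
      (fun y hy => by simp only [hg hy]; ring),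
    intervalIntegral.integral_comp_sub_right (fun x => (c * x * ((b - a) - x)) ^ 2), sub_self,
    integral_parabolicArch_sq]

end PolynomialIntegrals

noncomputable section TriangularBathymetry

variable {b₀ l₁ l₂ y : ℝ}

def triangularBathymetry (b₀ l₁ l₂ : ℝ) (y : ℝ) : ℝ :=
  if y ≤ l₁ then b₀ * (1 - y / l₁) else b₀ * (y - l₁) / l₂

/-- The paper's `S`, with the mean depth `b̄ = b₀ / 2` already substituted. -/
def triangularDeficit (b₀ l₁ l₂ : ℝ) (y : ℝ) : ℝ :=
  ∫ s in (0:ℝ)..y, (b₀ / 2 - triangularBathymetry b₀ l₁ l₂ s)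

lemma triangularBathymetry_of_le (h : y ≤ l₁) :
    triangularBathymetry b₀ l₁ l₂ y = b₀ * (1 - y / l₁) :=
  if_pos h

lemma triangularBathymetry_of_ge (hl₁ : l₁ ≠ 0) (h : l₁ ≤ y) :
    triangularBathymetry b₀ l₁ l₂ y = b₀ * (y - l₁) / l₂ := by
  rcases h.eq_or_lt with rfl | h
  · rw [triangularBathymetry_of_le le_rfl, div_self hl₁]
    ring
  · exact if_neg h.not_ge

lemma continuous_triangularBathymetry (hl₁ : l₁ ≠ 0) :
    Continuous (triangularBathymetry b₀ l₁ l₂) :=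
  Continuous.if_le (by fun_prop) (by fun_prop) continuous_id continuous_const fun y hy => by
    rw [hy, div_self hl₁]
    ring

lemma integral_triangularBathymetry (h₁ : 0 < l₁) (h₂ : 0 < l₂) :
    ∫ y in (0:ℝ)..l₁ + l₂, triangularBathymetry b₀ l₁ l₂ y = b₀ * (l₁ + l₂) / 2 := by
  have hint : ∀ a c, IntervalIntegrable (triangularBathymetry b₀ l₁ l₂) volume a c :=
    (continuous_triangularBathymetry h₁.ne').intervalIntegrable
  rw [← integral_add_adjacent_intervals (hint 0 l₁) (hint l₁ (l₁ + l₂)),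
    integral_of_eqOn_affine (p := b₀) (q := -b₀ / l₁) fun y hy => ?left,
    integral_of_eqOn_affine (p := 0) (q := b₀ / l₂) fun y hy => ?right]
  · field_simp
    ring
  case left =>
    rw [uIcc_of_le h₁.le] at hy
    rw [triangularBathymetry_of_le hy.2]
    field_simp
    ring
  case right =>
    rw [uIcc_of_le (by linarith)] at hy
    rw [triangularBathymetry_of_ge h₁.ne' hy.1]
    ring

lemma eqOn_triangularDeficit_left (h₁ : 0 < l₁) :
    EqOn (triangularDeficit b₀ l₁ l₂) (fun y => -(b₀ / (2 * l₁)) * (y - 0) * (l₁ - y))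
      (uIcc 0 l₁) := by
  intro y hy
  rw [uIcc_of_le h₁.le] at hy
  rw [triangularDeficit, integral_of_eqOn_affine (p := -b₀ / 2) (q := b₀ / l₁) fun s hs => ?_]
  · field_simp
    ring
  · rw [uIcc_of_le hy.1] at hs
    rw [triangularBathymetry_of_le (hs.2.trans hy.2)]
    field_simp
    ring

lemma eqOn_triangularDeficit_right (h₁ : 0 < l₁) (h₂ : 0 < l₂) :
    EqOn (triangularDeficit b₀ l₁ l₂) (fun y => b₀ / (2 * l₂) * (y - l₁) * (l₁ + l₂ - y))
      (uIcc l₁ (l₁ + l₂)) := by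
  intro y hy
  rw [uIcc_of_le (by linarith)] at hy
  have hint : ∀ a c, IntervalIntegrable (fun s => b₀ / 2 - triangularBathymetry b₀ l₁ l₂ s)
      volume a c :=
    (continuous_const.sub (continuous_triangularBathymetry h₁.ne')).intervalIntegrable
  have hS₁ : triangularDeficit b₀ l₁ l₂ l₁ = 0 := by
    rw [eqOn_triangularDeficit_left h₁ right_mem_uIcc]
    ring
  rw [triangularDeficit, ← integral_add_adjacent_intervals (hint 0 l₁) (hint l₁ y),
    ← triangularDeficit, hS₁, zero_add,
    integral_of_eqOn_affine (p := b₀ / 2) (q := -b₀ / l₂) fun s hs => ?_]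
  · field_simp
    ring
  · rw [uIcc_of_le hy.1] at hs
    rw [triangularBathymetry_of_ge h₁.ne' hs.1]
    ring

lemma continuous_triangularDeficit (hl₁ : l₁ ≠ 0) : Continuous (triangularDeficit b₀ l₁ l₂) :=
  continuous_primitive
    (continuous_const.sub (continuous_triangularBathymetry hl₁)).intervalIntegrable 0

lemma integral_triangularDeficit (h₁ : 0 < l₁) (h₂ : 0 < l₂) :
    ∫ y in (0:ℝ)..l₁ + l₂, triangularDeficit b₀ l₁ l₂ y = b₀ * (l₂ ^ 2 - l₁ ^ 2) / 12 := by
  have hint : ∀ a c, IntervalIntegrable (triangularDeficit b₀ l₁ l₂) volume a c :=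
    (continuous_triangularDeficit h₁.ne').intervalIntegrable
  rw [← integral_add_adjacent_intervals (hint 0 l₁) (hint l₁ (l₁ + l₂)),
    integral_of_eqOn_parabolicArch (eqOn_triangularDeficit_left h₁),
    integral_of_eqOn_parabolicArch (eqOn_triangularDeficit_right h₁ h₂)]
  field_simp
  ring

lemma integral_triangularDeficit_sq (h₁ : 0 < l₁) (h₂ : 0 < l₂) :
    ∫ y in (0:ℝ)..l₁ + l₂, triangularDeficit b₀ l₁ l₂ y ^ 2 = b₀ ^ 2 * (l₁ ^ 3 + l₂ ^ 3) / 120 := by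
  have hint : ∀ a c, IntervalIntegrable (fun y => triangularDeficit b₀ l₁ l₂ y ^ 2) volume a c :=
    ((continuous_triangularDeficit h₁.ne').pow 2).intervalIntegrable
  rw [← integral_add_adjacent_intervals (hint 0 l₁) (hint l₁ (l₁ + l₂)),
    integral_sq_of_eqOn_parabolicArch (eqOn_triangularDeficit_left h₁),
    integral_sq_of_eqOn_parabolicArch (eqOn_triangularDeficit_right h₁ h₂)]
  field_simp
  ring

end TriangularBathymetry

theorem chi_triangular_general (b₀ l₁ l₂ : ℝ) (h₁ : 0 < l₁) (h₂ : 0 < l₂) :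
    let l : ℝ := l₁ + l₂
    let b : ℝ → ℝ := fun y => if y ≤ l₁ then b₀ * (1 - y/l₁) else b₀ * (y - l₁)/l₂
    let bbar : ℝ := (1/l) * ∫ t in (0:ℝ)..l, b t
    let S : ℝ → ℝ := fun y => ∫ s in (0:ℝ)..y, (bbar - b s)
    (1/l) * (∫ y in (0:ℝ)..l, (S y)^2) - ((1/l) * ∫ y in (0:ℝ)..l, S y)^2
      = b₀^2 * (l₁^2 + 4*l₁*l₂ + l₂^2) / 720 := by
  intro l b bbar S
  have hbbar : bbar = b₀ / 2 := by
    change (1 / (l₁ + l₂)) * ∫ t in (0:ℝ)..l₁ + l₂, triangularBathymetry b₀ l₁ l₂ t = _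
    rw [integral_triangularBathymetry h₁ h₂]
    field_simp
  have hS : S = triangularDeficit b₀ l₁ l₂ := by
    ext y
    simp only [S, hbbar]
    rfl
  change (1 / (l₁ + l₂)) * (∫ y in (0:ℝ)..l₁ + l₂, S y ^ 2)
    - ((1 / (l₁ + l₂)) * ∫ y in (0:ℝ)..l₁ + l₂, S y) ^ 2 = _
  rw [hS, integral_triangularDeficit_sq h₁ h₂, integral_triangularDeficit h₁ h₂]
  field_simp
  ring

/-- For the triangular bathymetry on `[0, l₁+l₂]`, the variance of
`S(y) = ∫₀ʸ (b̄ - b)` equals `b₀²(l₁² + 4 l₁ l₂ + l₂²)/720`. -/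
theorem chi_triangular (b₀ l₁ l₂ : ℝ) (hb₀ : 0 < b₀) (h₁ : 0 < l₁) (h₂ : 0 < l₂) :
    let l : ℝ := l₁ + l₂
    let b : ℝ → ℝ := fun y => if y ≤ l₁ then b₀ * (1 - y/l₁) else b₀ * (y - l₁)/l₂
    let bbar : ℝ := (1/l) * ∫ t in (0:ℝ)..l, b t
    let S : ℝ → ℝ := fun y => ∫ s in (0:ℝ)..y, (bbar - b s)
    (1/l) * (∫ y in (0:ℝ)..l, (S y)^2) - ((1/l) * ∫ y in (0:ℝ)..l, S y)^2
      = b₀^2 * (l₁^2 + 4*l₁*l₂ + l₂^2) / 720 :=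
  chi_triangular_general b₀ l₁ l₂ h₁ h₂
end

section
/- The 4×4 quasilinear hyperbolic relaxation system with conservative variables (h, hu, hη, hw), fluxes (hu, hu² + p_tot, huη, huw) where p_tot = g h²/2 + μ(η − 1/h), has characteristic speeds λ₁ = u − c, λ₂ = λ₃ = u, λ₄ = u + c, where c² = g h + μ/h². In particular, for g, μ > 0 and h > 0 the system is hyperbolic (all eigenvalues real) with c > 0. -/
/-! The Fréchet derivative of the flux at `(h, hu, hη, hw)` is `relaxationJacobian`, and its
eigenvalues are the roots of its characteristic polynomial. Expanding along the last column, whose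
only nonzero entry is `u`, the `μη/h` contributions of the pressure cancel and the polynomial
factors as `(λ - u)² ((λ - u)² - c²)` with `c² = gh + μ/h²`. -/

theorem HasFDerivAt.div {𝕜 E : Type*} [NontriviallyNormedField 𝕜] [NormedAddCommGroup E]
    [NormedSpace 𝕜 E] {c d : E → 𝕜} {c' d' : E →L[𝕜] 𝕜} {x : E}
    (hc : HasFDerivAt c c' x) (hd : HasFDerivAt d d' x) (hx : d x ≠ 0) :
    HasFDerivAt (fun y => c y / d y) ((d x ^ 2)⁻¹ • (d x • c' - c x • d')) x := by
  have hinv : HasFDerivAt (fun y => (d y)⁻¹) (-(d x ^ 2)⁻¹ • d') x :=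
    (hasDerivAt_inv hx).comp_hasFDerivAt x hd
  simp only [div_eq_mul_inv]
  refine (hc.mul hinv).congr_fderiv ?_
  ext v
  simp only [add_apply, smul_apply, smul_eq_mul, sub_apply]
  field_simp
  ring

noncomputable def relaxationFlux (g μ : ℝ) (q : Fin 4 → ℝ) : Fin 4 → ℝ :=
  ![q 1,
    (q 1)^2 / (q 0) + g * (q 0)^2 / 2 + μ * ((q 2)/(q 0) - 1/(q 0)),
    (q 1) * (q 2) / (q 0),
    (q 1) * (q 3) / (q 0)]

noncomputable def relaxationJacobian (g μ h u η w : ℝ) : Matrix (Fin 4) (Fin 4) ℝ :=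
  !![0, 1, 0, 0;
     g*h + μ/h^2 - μ*η/h - u^2, 2*u, μ/h, 0;
     -(u*η), η, u, 0;
     -(u*w), w, 0, u]

theorem hasFDerivAt_relaxationFlux {g μ h u η w : ℝ} (hh : h ≠ 0) :
    HasFDerivAt (relaxationFlux g μ)
      (Matrix.toLin' (relaxationJacobian g μ h u η w)).toContinuousLinearMap
      ![h, h*u, h*η, h*w] := by
  set q : Fin 4 → ℝ := ![h, h*u, h*η, h*w]
  have hq : q 0 ≠ 0 := hh
  have coord (i : Fin 4) := hasFDerivAt_apply (𝕜 := ℝ) i q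
  refine hasFDerivAt_pi'' fun i => ?_
  fin_cases i
  · refine (coord 1).congr_fderiv ?_
    ext v
    simp [relaxationJacobian, dotProduct, Fin.sum_univ_four]
  · have kinetic := ((coord 1).pow 2).div (coord 0) hq
    have hydrostatic := ((coord 0).pow 2).const_mul g |>.div (hasFDerivAt_const 2 q) two_ne_zero
    have relaxation :=
      (((coord 2).div (coord 0) hq).sub ((hasFDerivAt_const 1 q).div (coord 0) hq)).const_mul μ
    refine (kinetic.add hydrostatic |>.add relaxation).congr_fderiv ?_
    ext v
    simp [q, relaxationJacobian, dotProduct, Fin.sum_univ_four]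
    field_simp
    ring
  · refine ((coord 1).mul (coord 2) |>.div (coord 0) hq).congr_fderiv ?_
    ext v
    simp [q, relaxationJacobian, dotProduct, Fin.sum_univ_four]
    field_simp
    ring
  · refine ((coord 1).mul (coord 3) |>.div (coord 0) hq).congr_fderiv ?_
    ext v
    simp [q, relaxationJacobian, dotProduct, Fin.sum_univ_four]
    field_simp
    ring

theorem det_scalar_sub_relaxationJacobian (g μ h u η w lam : ℝ) :
    (Matrix.scalar (Fin 4) lam - relaxationJacobian g μ h u η w).det =
      (lam - u)^2 * ((lam - u)^2 - (g*h + μ/h^2)) := by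
  rw [Matrix.det_succ_column _ 3]
  simp [relaxationJacobian, Fin.sum_univ_four, Matrix.det_fin_three, Fin.succAbove]
  ring

theorem Matrix.hasEigenvalue_toLin'_iff_det_eq_zero {K n : Type*} [Field K] [Fintype n]
    [DecidableEq n] (A : Matrix n n K) (lam : K) :
    Module.End.HasEigenvalue (Matrix.toLin' A) lam ↔ (Matrix.scalar n lam - A).det = 0 := by
  rw [Module.End.hasEigenvalue_iff_isRoot_charpoly, Matrix.charpoly_toLin', Polynomial.IsRoot,
    Matrix.eval_charpoly]

theorem sq_mul_sq_sub_sq_eq_zero_iff {R : Type*} [CommRing R] [IsDomain R] {x u c : R} :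
    (x - u)^2 * ((x - u)^2 - c^2) = 0 ↔ x = u - c ∨ x = u ∨ x = u + c := by
  rw [show (x - u)^2 * ((x - u)^2 - c^2) = (x - (u - c)) * ((x - u)^2 * (x - (u + c))) by ring]
  simp only [mul_eq_zero, pow_eq_zero_iff two_ne_zero, sub_eq_zero]

/-- The 4×4 hyperbolic relaxation system with conserved variables
`(h, hu, hη, hw)`, fluxes `(hu, hu² + p_tot, huη, huw)` and
`p_tot = g h²/2 + μ(η - 1/h)`, has real characteristic speeds
`u - c, u, u, u + c` with `c² = gh + μ/h² > 0`: the eigenvalues of the flux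
Jacobian are exactly `u - c`, `u`, `u + c`. -/
theorem relaxation_system_eigenvalues (g μ h u η w : ℝ)
    (hg : 0 < g) (hμ : 0 < μ) (hh : 0 < h) :
    let F : (Fin 4 → ℝ) → (Fin 4 → ℝ) := fun q =>
      ![q 1,
        (q 1)^2 / (q 0) + g * (q 0)^2 / 2 + μ * ((q 2)/(q 0) - 1/(q 0)),
        (q 1) * (q 2) / (q 0),
        (q 1) * (q 3) / (q 0)]
    let q : Fin 4 → ℝ := ![h, h*u, h*η, h*w]
    let c : ℝ := Real.sqrt (g*h + μ/h^2)
    0 < c ∧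
    ∀ lam : ℝ,
      Module.End.HasEigenvalue ((fderiv ℝ F q).toLinearMap) lam ↔
        (lam = u - c ∨ lam = u ∨ lam = u + c) := by
  intro F q c
  have hc_sq : 0 < g*h + μ/h^2 := by positivity
  have hF : HasFDerivAt F
      (Matrix.toLin' (relaxationJacobian g μ h u η w)).toContinuousLinearMap q :=
    hasFDerivAt_relaxationFlux hh.ne'
  refine ⟨Real.sqrt_pos.mpr hc_sq, fun lam => ?_⟩
  rw [hF.fderiv, LinearMap.coe_toContinuousLinearMap, Matrix.hasEigenvalue_toLin'_iff_det_eq_zero,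
    det_scalar_sub_relaxationJacobian, ← Real.sq_sqrt hc_sq.le]
  exact sq_mul_sq_sub_sq_eq_zero_iff
end
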